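/- Let F be a field of characteristic different from 2 and 3, and suppose s ∈ F satisfies s² = −3. Let K = F(T) be the field of rational functions over F, and let E be the elliptic curve over K given by Y² = X³ − 27T³(T+8)X + 54T⁴(T² − 20T − 8). Then the affine point (−9T², 12T²(T−1)s) is a K-rational point of order 3 on E. -/

import Mathlib

/-!
The point `P = (x, y)` is a flex of `E`: the tangent slope `λ = (3x² + a₄) / (2y) = -3Ts`
satisfies `λ² = 3x`, so the tangent line at `P` meets `E` only at `P`. Hence `2P = -P`,
i.e. `3P = 0`, and `P ≠ 0` forces order exactly `3`.
-/

namespace WeierstrassCurve.Affine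

variable {F : Type*} [Field F] {x y : F}

section CharNeTwoNF

variable {W : WeierstrassCurve F} [W.IsCharNeTwoNF]

lemma negY_of_isCharNeTwoNF : W.toAffine.negY x y = -y := by
  simp [negY, a₁_of_isCharNeTwoNF, a₃_of_isCharNeTwoNF]

lemma Y_ne_negY_of_isCharNeTwoNF (h2 : (2 : F) ≠ 0) (hy : y ≠ 0) :
    y ≠ W.toAffine.negY x y := by
  rw [negY_of_isCharNeTwoNF, ne_eq, eq_neg_iff_add_eq_zero, ← two_mul]
  exact mul_ne_zero h2 hy

lemma nonsingular_of_Y_ne_zero (h2 : (2 : F) ≠ 0) (h : W.toAffine.Equation x y)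
    (hy : y ≠ 0) : W.toAffine.Nonsingular x y :=
  (nonsingular_iff x y).mpr ⟨h, Or.inr (Y_ne_negY_of_isCharNeTwoNF h2 hy)⟩

variable [DecidableEq F]

lemma addX_slope_self_of_isCharNeTwoNF (h2 : (2 : F) ≠ 0) (hy : y ≠ 0)
    (hflex : (3 * x ^ 2 + 2 * W.a₂ * x + W.a₄) ^ 2 = 4 * (3 * x + W.a₂) * y ^ 2) :
    W.toAffine.addX x x (W.toAffine.slope x x y y) = x := by
  have hy' : y ≠ W.toAffine.negY x y := Y_ne_negY_of_isCharNeTwoNF h2 hy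
  have hslope : W.toAffine.slope x x y y ^ 2 = 3 * x + W.a₂ := by
    rw [slope_of_Y_ne rfl hy', div_pow, div_eq_iff (pow_ne_zero 2 (sub_ne_zero.mpr hy')),
      negY_of_isCharNeTwoNF]
    simp only [a₁_of_isCharNeTwoNF]
    linear_combination hflex
  rw [addX]
  simp only [a₁_of_isCharNeTwoNF]
  linear_combination hslope

end CharNeTwoNF

namespace Point

variable [DecidableEq F] {W : Affine F}

lemma add_self_eq_neg_of_addX_eq (h : W.Nonsingular x y) (hy : y ≠ W.negY x y)
    (hx : W.addX x x (W.slope x x y y) = x) : some _ _ h + some _ _ h = -some _ _ h := by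
  rw [add_self_of_Y_ne' hy]
  simp only [negAddY, hx, sub_self, mul_zero, zero_add]

lemma addOrderOf_eq_three_of_addX_eq (h : W.Nonsingular x y) (hy : y ≠ W.negY x y)
    (hx : W.addX x x (W.slope x x y y) = x) : addOrderOf (some _ _ h) = 3 := by
  have : Fact (Nat.Prime 3) := ⟨Nat.prime_three⟩
  refine addOrderOf_eq_prime ?_ (some_ne_zero h)
  rw [show 3 = 2 + 1 from rfl, succ_nsmul, two_nsmul, add_self_eq_neg_of_addX_eq h hy hx,
    neg_add_cancel]

end Point

end WeierstrassCurve.Affine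

open WeierstrassCurve WeierstrassCurve.Affine

section HesseCurve

variable {K : Type*} [Field K]

/-- Under `t = μ³` and `(X, Y) ↦ (μ⁴X, μ⁶Y)` this is the Weierstrass model
`Y² = X³ - 27μ(μ³ + 8)X + 54(μ⁶ - 20μ³ - 8)` of the Hesse cubic
`X³ + Y³ + Z³ = 3μXYZ`. -/
def hesseCurve (t : K) : WeierstrassCurve K :=
  ⟨0, 0, 0, -27 * t ^ 3 * (t + 8), 54 * t ^ 4 * (t ^ 2 - 20 * t - 8)⟩

instance (t : K) : (hesseCurve t).IsCharNeTwoNF := ⟨rfl, rfl⟩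

theorem hesseCurve_exists_addOrderOf_eq_three [DecidableEq K] {t c : K} (h2 : (2 : K) ≠ 0)
    (h3 : (3 : K) ≠ 0) (hc : c ^ 2 = -3) (ht0 : t ≠ 0) (ht1 : t ≠ 1) :
    ∃ h : (hesseCurve t).toAffine.Nonsingular (-9 * t ^ 2) (12 * t ^ 2 * (t - 1) * c),
      addOrderOf (Point.some _ _ h) = 3 := by
  have hc0 : c ≠ 0 := by
    rintro rfl
    exact h3 (by linear_combination hc)
  have hy : 12 * t ^ 2 * (t - 1) * c ≠ 0 := by
    have h12 : (12 : K) = 2 ^ 2 * 3 := by norm_num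
    simp [h12, h2, h3, ht0, sub_eq_zero, ht1, hc0]
  have heq : (hesseCurve t).toAffine.Equation (-9 * t ^ 2) (12 * t ^ 2 * (t - 1) * c) := by
    rw [equation_iff]
    simp only [hesseCurve]
    linear_combination 144 * t ^ 4 * (t - 1) ^ 2 * hc
  have hflex : (3 * (-9 * t ^ 2) ^ 2 + 2 * (hesseCurve t).a₂ * (-9 * t ^ 2) +
      (hesseCurve t).a₄) ^ 2 =
        4 * (3 * (-9 * t ^ 2) + (hesseCurve t).a₂) * (12 * t ^ 2 * (t - 1) * c) ^ 2 := by
    simp only [hesseCurve]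
    linear_combination 15552 * t ^ 6 * (t - 1) ^ 2 * hc
  exact ⟨nonsingular_of_Y_ne_zero h2 heq hy, Point.addOrderOf_eq_three_of_addX_eq _
    (Y_ne_negY_of_isCharNeTwoNF h2 hy) (addX_slope_self_of_isCharNeTwoNF h2 hy hflex)⟩

end HesseCurve

open Classical in
/-- Let `F` be a field of characteristic different from `2` and `3` containing a square root `s`
of `-3`, and let `K = F(T)`. Then `(-9T², 12T²(T-1)s)` is a `K`-rational point of order `3` on the
elliptic curve `Y² = X³ - 27T³(T+8)X + 54T⁴(T² - 20T - 8)`. -/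
theorem stmt13 {F : Type*} [Field F] (h2 : (2 : F) ≠ 0) (h3 : (3 : F) ≠ 0)
    (s : F) (hs : s ^ 2 = -3) :
    letI K := RatFunc F
    letI T : K := RatFunc.X
    letI E : WeierstrassCurve K :=
      ⟨0, 0, 0, -27 * T ^ 3 * (T + 8), 54 * T ^ 4 * (T ^ 2 - 20 * T - 8)⟩
    ∃ h : E.toAffine.Nonsingular (-9 * T ^ 2)
        (12 * T ^ 2 * (T - 1) * algebraMap F K s),
      addOrderOf (WeierstrassCurve.Affine.Point.some _ _ h) = 3 := by
  have h2K : (2 : RatFunc F) ≠ 0 := by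
    simpa only [map_ofNat] using (map_ne_zero (algebraMap F (RatFunc F))).mpr h2
  have h3K : (3 : RatFunc F) ≠ 0 := by
    simpa only [map_ofNat] using (map_ne_zero (algebraMap F (RatFunc F))).mpr h3
  have hsK : algebraMap F (RatFunc F) s ^ 2 = -3 := by
    rw [← map_pow, hs, map_neg, map_ofNat]
  have hT1 : (RatFunc.X : RatFunc F) ≠ 1 := by
    simpa using (RatFunc.algebraMap_injective F).ne (Polynomial.X_ne_C (1 : F))
  exact hesseCurve_exists_addOrderOf_eq_three h2K h3K hsK RatFunc.X_ne_zero hT1
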